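/- Let R = GF(2)[c]/(c³) and S = R[[d]]. For all natural numbers u ≥ 2 and v ≥ 0, setting i = 2^u(2v+1), the element (1 + c)³·(1 + c + c² + d) is a unit in S and the coefficient of c² in the d^i coefficient of d^{2^u(v+1)}·(1 + c + c² + d)^{2^u(v+1)}·((1 + c)³·(1 + c + c² + d))^{-1} ∈ S equals 1. -/

import Mathlib

/-! In characteristic 2 with `c³ = 0` one has `(1 + c)³ = 1 + c + c²` and `(1 + c)⁴ = 1`. Writing
`B = d + (1 + c)³` and `m = 2^u (v + 1)`, the series is `d^m B^(m-1) (1 + c)`, whose coefficient of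
`d^(2^u v + m)` is `C(m - 1, 2^u v) (1 + c)^(3 (2^u - 1) + 1)`. The binomial coefficient is odd by
Lucas's theorem, and the exponent is `2` mod `4` because `4 ∣ 2^u`, leaving `(1 + c)² = 1 + c²`. -/

open Polynomial PowerSeries

noncomputable section

/-- The ring `R = GF(2)[c] / (c³)`. -/
abbrev R2 : Type := AdjoinRoot (Polynomial.X ^ 3 : Polynomial (ZMod 2))

/-- The class of the variable `c` in `R = GF(2)[c] / (c³)`. -/
def cR : R2 := AdjoinRoot.root _

/-- The power series ring `S = R[[d]]`. -/
abbrev S2 : Type := PowerSeries R2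

/-- The image of `c` in `S = R[[d]]`. -/
def cS : S2 := PowerSeries.C (R := R2) cR

/-- The variable `d` of `S = R[[d]]`. -/
def dS : S2 := PowerSeries.X

/-- The coefficient of `c²` of an element of `R = GF(2)[c] / (c³)`,
computed via the unique representative polynomial of degree `< 3`. -/
def coefc2 (x : R2) : ZMod 2 :=
  (AdjoinRoot.modByMonicHom (Polynomial.monic_X_pow 3) x).coeff 2

theorem Choose.choose_pow_mul_add_modEq_one {p u v r : ℕ} [Fact p.Prime] (hr : r < p ^ u) :
    (p ^ u * v + r).choose (p ^ u * v) ≡ 1 [MOD p] := by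
  induction u generalizing r with
  | zero => simp_all; rfl
  | succ u ih =>
    have hp : 0 < p := (Fact.out : p.Prime).pos
    have hr' : r / p < p ^ u := by rw [Nat.div_lt_iff_lt_mul hp, ← pow_succ]; exact hr
    refine Choose.choose_modEq_choose_mod_mul_choose_div_nat.trans ?_
    rw [pow_succ', mul_assoc, Nat.mul_add_mod, Nat.mul_mod_right, Nat.choose_zero_right, one_mul,
      Nat.mul_add_div hp, Nat.mul_div_cancel_left _ hp]
    exact ih hr'

theorem Ring.pow_mul_inverse_mul {M₀ : Type*} [CommMonoidWithZero M₀] {x b b' : M₀}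
    (hx : IsUnit x) (hb : b * b' = 1) {m : ℕ} (hm : m ≠ 0) :
    x ^ m * Ring.inverse (b * x) = x ^ (m - 1) * b' := by
  obtain ⟨k, rfl⟩ := Nat.exists_eq_add_one_of_ne_zero hm
  refine ((Ring.eq_mul_inverse_iff_mul_eq _ _ _ ((IsUnit.of_mul_eq_one b' hb).mul hx)).2 ?_).symm
  calc x ^ (k + 1 - 1) * b' * (b * x) = x ^ k * x * (b * b') := by rw [Nat.add_sub_cancel]; ac_rfl
    _ = x ^ (k + 1) := by rw [hb, mul_one, pow_succ]

theorem PowerSeries.coeff_X_add_C_pow {R : Type*} [CommSemiring R] (a : R) (k n : ℕ) :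
    coeff n ((X + C a) ^ k : R⟦X⟧) = a ^ (k - n) * k.choose n := by
  rw [← Polynomial.coe_X, ← Polynomial.coe_C, ← Polynomial.coe_add, ← Polynomial.coe_pow,
    Polynomial.coeff_coe, Polynomial.coeff_X_add_C_pow]

instance : Nontrivial R2 := AdjoinRoot.nontrivial _ (by simp)

instance : CharP R2 2 := charP_of_injective_algebraMap' (ZMod 2) 2

lemma cR_pow_three : cR ^ 3 = 0 := by
  rw [cR, ← AdjoinRoot.mk_X, ← map_pow, AdjoinRoot.mk_self]

lemma one_add_cR_sq : (1 + cR) ^ 2 = 1 + cR ^ 2 := by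
  simpa using add_pow_char (1 : R2) cR 2

lemma one_add_cR_pow_four : (1 + cR) ^ 4 = 1 := by
  simpa [pow_succ _ 3, cR_pow_three] using add_pow_char_pow (1 : R2) cR (p := 2) (n := 2)

lemma one_add_cR_pow_three : (1 + cR) ^ 3 = 1 + cR + cR ^ 2 := by
  linear_combination cR_pow_three + (cR + cR ^ 2) * (CharTwo.two_eq_zero (R := R2))

lemma coefc2_one_add_cR_sq : coefc2 (1 + cR ^ 2) = 1 := by
  have h : (1 + cR ^ 2 : R2) = AdjoinRoot.mk _ (1 + Polynomial.X ^ 2) := by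
    simp [cR, AdjoinRoot.mk_X]
  rw [coefc2, h, AdjoinRoot.modByMonicHom_mk, (Polynomial.modByMonic_eq_self_iff (monic_X_pow 3)).2]
  · simp [Polynomial.coeff_one]
  · compute_degree!

lemma one_add_cR_pow_of_mod_four_eq_two {n : ℕ} (hn : n % 4 = 2) : (1 + cR) ^ n = 1 + cR ^ 2 := by
  rw [pow_eq_pow_mod n one_add_cR_pow_four, hn, one_add_cR_sq]

theorem unit_and_coefc2_case_iii (u v : ℕ) (hu : 2 ≤ u) :
    IsUnit ((1 + cS) ^ 3 * (1 + cS + cS ^ 2 + dS)) ∧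
      coefc2 (PowerSeries.coeff (R := R2) (2 ^ u * (2 * v + 1))
          (dS ^ (2 ^ u * (v + 1)) * (1 + cS + cS ^ 2 + dS) ^ (2 ^ u * (v + 1)) *
            Ring.inverse ((1 + cS) ^ 3 * (1 + cS + cS ^ 2 + dS)))) = 1 := by
  have hB : 1 + cS + cS ^ 2 + dS = PowerSeries.X + PowerSeries.C ((1 + cR) ^ 3) := by
    simp only [cS, dS, one_add_cR_pow_three, map_add, map_one, map_pow]; ring
  have hA : (1 + cS) ^ 3 = PowerSeries.C ((1 + cR) ^ 3) := by simp [cS]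
  have ha : (1 + cR) ^ 3 * (1 + cR) = 1 := by rw [← pow_succ, one_add_cR_pow_four]
  have hunitB : IsUnit (PowerSeries.X + PowerSeries.C ((1 + cR) ^ 3)) := by
    simpa [isUnit_iff_constantCoeff] using IsUnit.of_mul_eq_one _ ha
  rw [hB, hA]
  refine ⟨(IsUnit.of_mul_eq_one _ ha).map PowerSeries.C |>.mul hunitB, ?_⟩
  have h4 : 4 ∣ 2 ^ u := Nat.pow_dvd_pow 2 hu
  have hpos : 0 < 2 ^ u := by positivity
  have hm : 2 ^ u * (v + 1) - 1 = 2 ^ u * v + (2 ^ u - 1) := by rw [mul_add, mul_one]; omega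
  have hchoose : ((2 ^ u * v + (2 ^ u - 1)).choose (2 ^ u * v) : R2) = 1 := by
    rw [CharP.cast_eq_mod R2 2, Choose.choose_pow_mul_add_modEq_one (by omega), Nat.cast_one]
  rw [mul_assoc, Ring.pow_mul_inverse_mul hunitB (b' := PowerSeries.C (1 + cR))
      (by rw [← map_mul, ha, map_one]) (by positivity),
    show 2 ^ u * (2 * v + 1) = 2 ^ u * v + 2 ^ u * (v + 1) by ring, dS,
    PowerSeries.coeff_X_pow_mul, PowerSeries.coeff_mul_C, PowerSeries.coeff_X_add_C_pow, hm,
    Nat.add_sub_cancel_left, hchoose, mul_one]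
  rw [← pow_mul, ← pow_succ, one_add_cR_pow_of_mod_four_eq_two (by omega), coefc2_one_add_cR_sq]

end
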